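/- arXiv:1701.06359 — 5 statements merged into one kernel-verified Lean document; each statement's English description precedes it below -/
import Mathlib

section
/- Logarithmic slow scale micro-ellipticity is independent of the representative: suppose (a_ε) satisfies |a_ε(x,ξ)| ≥ (1/s_ε)⟨ξ⟩^m for (x,ξ) ∈ U × Γ, |ξ| ≥ r_ε, ε ∈ (0,η₁], where (r_ε),(s_ε) ∈ Π_lsc, and suppose (n_ε) is a negligible net of symbols, i.e. sup_{U×Γ} |n_ε(x,ξ)|⟨ξ⟩^{-m} = O(ε^q) for every q. Then there exists η ∈ (0,1] with |a_ε(x,ξ) + n_ε(x,ξ)| ≥ (1/(2s_ε))⟨ξ⟩^m for all (x,ξ) ∈ U × Γ with |ξ| ≥ r_ε and ε ∈ (0,η]. -/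
/-- The set of logarithmic slow scale nets. -/
def IsLSC (ω : ℝ → ℝ) : Prop :=
  (∃ η ∈ Set.Ioc (0:ℝ) 1, ∃ c > (0:ℝ), ∀ ε ∈ Set.Ioc (0:ℝ) η, c ≤ ω ε) ∧
  (∃ η ∈ Set.Ioc (0:ℝ) 1, ∀ p : ℝ, 0 ≤ p → ∃ cp > (0:ℝ), ∀ ε ∈ Set.Ioc (0:ℝ) η,
      |ω ε| ^ p ≤ cp * Real.log (1/ε))

/-- Japanese bracket `⟨ξ⟩ = (1 + |ξ|²)^{1/2}`. -/
noncomputable def jap {n : ℕ} (ξ : EuclideanSpace ℝ (Fin n)) : ℝ :=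
  Real.sqrt (1 + ‖ξ‖^2)

lemma jap_pos {n : ℕ} (ξ : EuclideanSpace ℝ (Fin n)) : 0 < jap ξ := by
  have : (0:ℝ) < 1 + ‖ξ‖^2 := by positivity
  exact Real.sqrt_pos.mpr this

lemma eps_log_le (ε : ℝ) (hε : 0 < ε) (hε1 : ε ≤ 1) :
    ε * Real.log (1/ε) ≤ 2 * Real.sqrt ε := by
  have hsq : 0 < Real.sqrt ε := Real.sqrt_pos.mpr hε
  have h1 : Real.log (1/ε) = 2 * Real.log (1 / Real.sqrt ε) := by
    rw [Real.log_div one_ne_zero (ne_of_gt hε), Real.log_div one_ne_zero (ne_of_gt hsq),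
      Real.log_one, Real.log_sqrt hε.le]
    ring
  have h2 : Real.log (1 / Real.sqrt ε) ≤ 1 / Real.sqrt ε := by
    have := Real.log_le_sub_one_of_pos (x := 1 / Real.sqrt ε) (by positivity)
    linarith
  have h3 : ε * Real.log (1/ε) ≤ ε * (2 * (1 / Real.sqrt ε)) := by
    rw [h1]
    have := mul_le_mul_of_nonneg_left (mul_le_mul_of_nonneg_left h2 (by norm_num : (0:ℝ) ≤ 2)) hε.le
    linarith
  have h4 : ε * (2 * (1 / Real.sqrt ε)) = 2 * (ε / Real.sqrt ε) := by ring
  rw [h4, Real.div_sqrt] at h3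
  exact h3

/-- Logarithmic slow scale micro-ellipticity is independent of the representative:
adding a negligible net of symbols preserves the lower bound, with `1/s_ε` replaced
by `1/(2 s_ε)`. -/
theorem microellipticity_representative_independent {n : ℕ} (m : ℝ)
    (U Γ : Set (EuclideanSpace ℝ (Fin n)))
    (a N : ℝ → EuclideanSpace ℝ (Fin n) → EuclideanSpace ℝ (Fin n) → ℂ)
    (r s : ℝ → ℝ) (hr : IsLSC r) (hs : IsLSC s)
    (η₁ : ℝ) (hη₁ : η₁ ∈ Set.Ioc (0:ℝ) 1)
    (hell : ∀ ε ∈ Set.Ioc (0:ℝ) η₁, ∀ x ∈ U, ∀ ξ ∈ Γ, r ε ≤ ‖ξ‖ →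
      (1 / s ε) * jap ξ ^ m ≤ ‖a ε x ξ‖)
    (hneg : ∀ q : ℕ, ∃ C > (0:ℝ), ∃ η ∈ Set.Ioc (0:ℝ) 1, ∀ ε ∈ Set.Ioc (0:ℝ) η,
      ∀ x ∈ U, ∀ ξ ∈ Γ, ‖N ε x ξ‖ * jap ξ ^ (-m) ≤ C * ε ^ (q:ℝ)) :
    ∃ η ∈ Set.Ioc (0:ℝ) 1, ∀ ε ∈ Set.Ioc (0:ℝ) η, ∀ x ∈ U, ∀ ξ ∈ Γ, r ε ≤ ‖ξ‖ →
      (1 / (2 * s ε)) * jap ξ ^ m ≤ ‖a ε x ξ + N ε x ξ‖ := by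
  obtain ⟨⟨ηs1, hηs1, c, hc, hsc⟩, ηs2, hηs2, hslog⟩ := hs
  obtain ⟨cp, hcp, hsp⟩ := hslog 1 zero_le_one
  obtain ⟨C, hC, η₂, hη₂, hN⟩ := hneg 1
  set δ : ℝ := (1 / (4 * C * cp))^2 with hδdef
  have hδ : 0 < δ := by positivity
  refine ⟨min (min η₁ δ) (min ηs1 (min ηs2 η₂)),
    ⟨lt_min (lt_min hη₁.1 hδ) (lt_min hηs1.1 (lt_min hηs2.1 hη₂.1)), le_trans (min_le_left _ _)
      (le_trans (min_le_left _ _) hη₁.2)⟩, ?_⟩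
  rintro ε ⟨hε, hεle⟩ x hx ξ hξ hrξ
  have hεη₁ : ε ≤ η₁ := le_trans hεle (le_trans (min_le_left _ _) (min_le_left _ _))
  have hεδ : ε ≤ δ := le_trans hεle (le_trans (min_le_left _ _) (min_le_right _ _))
  have hεs1 : ε ≤ ηs1 := le_trans hεle (le_trans (min_le_right _ _) (min_le_left _ _))
  have hεs2 : ε ≤ ηs2 := le_trans hεle (le_trans (min_le_right _ _)
    (le_trans (min_le_right _ _) (min_le_left _ _)))
  have hεη₂ : ε ≤ η₂ := le_trans hεle (le_trans (min_le_right _ _)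
    (le_trans (min_le_right _ _) (min_le_right _ _)))
  have hε1 : ε ≤ 1 := le_trans hεη₁ hη₁.2
  -- positivity of s ε
  have hsε : 0 < s ε := lt_of_lt_of_le hc (hsc ε ⟨hε, hεs1⟩)
  have hJ : 0 < jap ξ := jap_pos ξ
  have hJm : 0 < jap ξ ^ m := Real.rpow_pos_of_pos hJ m
  -- bound on ‖N‖
  have hNb : ‖N ε x ξ‖ ≤ C * ε * jap ξ ^ m := by
    have h := hN ε ⟨hε, hεη₂⟩ x hx ξ hξ
    rw [Real.rpow_neg hJ.le] at h
    have := mul_le_mul_of_nonneg_right h hJm.le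
    rw [mul_assoc, inv_mul_cancel₀ (ne_of_gt hJm), mul_one] at this
    calc ‖N ε x ξ‖ ≤ C * ε ^ ((1:ℕ):ℝ) * jap ξ ^ m := this
    _ = C * ε * jap ξ ^ m := by norm_num
  -- bound on s
  have hslog' : s ε ≤ cp * Real.log (1/ε) := by
    have h := hsp ε ⟨hε, hεs2⟩
    rw [Real.rpow_one] at h
    exact le_trans (le_abs_self _) h
  -- key: 2 * C * ε * s ε ≤ 1
  have hkey : 2 * C * ε * s ε ≤ 1 := by
    have h1 : 2 * C * ε * s ε ≤ 2 * C * cp * (ε * Real.log (1/ε)) := by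
      have := mul_le_mul_of_nonneg_left hslog' (by positivity : (0:ℝ) ≤ 2 * C * ε)
      nlinarith
    have h2 : ε * Real.log (1/ε) ≤ 2 * Real.sqrt ε := eps_log_le ε hε hε1
    have h3 : Real.sqrt ε ≤ 1 / (4 * C * cp) := by
      have := Real.sqrt_le_sqrt hεδ
      rwa [hδdef, Real.sqrt_sq (by positivity)] at this
    have h4 := mul_le_mul_of_nonneg_left h3 (by positivity : (0:ℝ) ≤ 4 * C * cp)
    have h5 : 4 * C * cp * (1 / (4 * C * cp)) = 1 := by field_simp
    linarith [mul_le_mul_of_nonneg_left h2 (by positivity : (0:ℝ) ≤ 2 * C * cp)]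
  -- reverse triangle: ‖a‖ - ‖N‖ ≤ ‖a + N‖
  have htri : ‖a ε x ξ‖ - ‖N ε x ξ‖ ≤ ‖a ε x ξ + N ε x ξ‖ := by
    have h := norm_add_le (a ε x ξ + N ε x ξ) (-(N ε x ξ))
    simp only [add_neg_cancel_right, norm_neg] at h
    linarith
  have hell' := hell ε ⟨hε, hεη₁⟩ x hx ξ hξ hrξ
  have hmid : (1 / (2 * s ε)) * jap ξ ^ m ≤ (1 / s ε) * jap ξ ^ m - C * ε * jap ξ ^ m := by
    have hCε : C * ε ≤ 1 / (2 * s ε) := by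
      rw [le_div_iff₀ (by positivity)]
      nlinarith
    have : 1 / (2 * s ε) + C * ε ≤ 1 / s ε := by
      rw [div_add' _ _ _ (by positivity : (2 * s ε) ≠ 0), div_le_div_iff₀ (by positivity)
        (by positivity : (0:ℝ) < s ε)]
      nlinarith
    nlinarith [mul_le_mul_of_nonneg_right this hJm.le]
  have hNb' : ‖a ε x ξ‖ - C * ε * jap ξ ^ m ≤ ‖a ε x ξ‖ - ‖N ε x ξ‖ := by linarith
  linarith
end

section
/- Derivative bounds from lsc micro-ellipticity: let (a_ε) be a net of symbols satisfying, for all α,β, sup |∂_ξ^α ∂_x^β a_ε(x,ξ)| ⟨ξ⟩^{-m+|α|} = O(ω_{α,β,ε}) for logarithmic slow scale nets (ω_{α,β,ε}), and satisfying the ellipticity bound |a_ε(x,ξ)| ≥ (1/s_ε)⟨ξ⟩^m on U × Γ for |ξ| ≥ r_ε, ε small, with (r_ε),(s_ε) ∈ Π_lsc. Then for all α, β there exists a logarithmic slow scale net (λ_ε) and η ∈ (0,1] such that |∂_ξ^α ∂_x^β a_ε(x,ξ)| ≤ λ_ε |a_ε(x,ξ)| ⟨ξ⟩^{-|α|} on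 U × Γ for |ξ| ≥ r_ε and ε ∈ (0,η]. -/
lemma one_le_jap {n : ℕ} (ξ : EuclideanSpace ℝ (Fin n)) : 1 ≤ jap ξ := by
  have h := Real.sqrt_le_sqrt (show (1:ℝ) ≤ 1 + ‖ξ‖^2 from le_add_of_nonneg_right (by positivity))
  simpa [jap] using h

/-- Derivative bounds from lsc micro-ellipticity: all derivatives of an lsc
micro-elliptic symbol are bounded by a logarithmic slow scale multiple of
`|a_ε(x,ξ)| ⟨ξ⟩^{-|α|}` on the ellipticity region. -/
theorem microelliptic_derivative_bounds {n : ℕ} (m : ℝ)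
    (U Γ : Set (EuclideanSpace ℝ (Fin n)))
    (a : ℝ → EuclideanSpace ℝ (Fin n) → EuclideanSpace ℝ (Fin n) → ℂ)
    (hsym : ∀ k l : ℕ, ∃ ω : ℝ → ℝ, IsLSC ω ∧ ∃ C > (0:ℝ), ∃ η ∈ Set.Ioc (0:ℝ) 1,
      ∀ ε ∈ Set.Ioc (0:ℝ) η, ∀ x ∈ U, ∀ ξ ∈ Γ,
        ‖iteratedFDeriv ℝ k (fun ξ' => iteratedFDeriv ℝ l (fun x' => a ε x' ξ') x) ξ‖
          * jap ξ ^ (-m + (k:ℝ)) ≤ C * ω ε)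
    (r s : ℝ → ℝ) (hr : IsLSC r) (hs : IsLSC s)
    (η₁ : ℝ) (hη₁ : η₁ ∈ Set.Ioc (0:ℝ) 1)
    (hell : ∀ ε ∈ Set.Ioc (0:ℝ) η₁, ∀ x ∈ U, ∀ ξ ∈ Γ, r ε ≤ ‖ξ‖ →
      (1 / s ε) * jap ξ ^ m ≤ ‖a ε x ξ‖) :
    ∀ k l : ℕ, ∃ lam : ℝ → ℝ, IsLSC lam ∧ ∃ η ∈ Set.Ioc (0:ℝ) 1,
      ∀ ε ∈ Set.Ioc (0:ℝ) η, ∀ x ∈ U, ∀ ξ ∈ Γ, r ε ≤ ‖ξ‖ →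
        ‖iteratedFDeriv ℝ k (fun ξ' => iteratedFDeriv ℝ l (fun x' => a ε x' ξ') x) ξ‖
          ≤ lam ε * ‖a ε x ξ‖ * jap ξ ^ (-(k:ℝ)) := by
  intro k l
  obtain ⟨ω, hω, C, hC, η₂, hη₂, hbound⟩ := hsym k l
  obtain ⟨ηa, hηa, cω, hcω, hωlow⟩ := hω.1
  obtain ⟨ηb, hηb, cs, hcs, hslow⟩ := hs.1
  refine ⟨fun ε => C * ω ε * s ε, ⟨?_, ?_⟩, ?_⟩
  · -- lower bound part of IsLSC
    refine ⟨min ηa ηb, ⟨lt_min hηa.1 hηb.1, (min_le_left _ _).trans hηa.2⟩,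
      C * cω * cs, by positivity, ?_⟩
    intro ε hε
    have h1 := hωlow ε ⟨hε.1, hε.2.trans (min_le_left _ _)⟩
    have h2 := hslow ε ⟨hε.1, hε.2.trans (min_le_right _ _)⟩
    have hω0 : (0:ℝ) < ω ε := lt_of_lt_of_le hcω h1
    have hs0 : (0:ℝ) < s ε := lt_of_lt_of_le hcs h2
    show C * cω * cs ≤ C * ω ε * s ε
    have h3 : cω * cs ≤ ω ε * s ε := mul_le_mul h1 h2 hcs.le hω0.le
    nlinarith [mul_le_mul_of_nonneg_left h3 hC.le]
  · -- log growth part of IsLSC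
    obtain ⟨ηc, hηc, hω2⟩ := hω.2
    obtain ⟨ηd, hηd, hs2⟩ := hs.2
    refine ⟨min (min ηc ηd) (1/2),
      ⟨lt_min (lt_min hηc.1 hηd.1) (by norm_num),
        ((min_le_left _ _).trans ((min_le_left _ _).trans hηc.2))⟩, ?_⟩
    intro p hp
    obtain ⟨c1, hc1, h1⟩ := hω2 (p * 2) (by positivity)
    obtain ⟨c2, hc2, h2⟩ := hs2 (p * 2) (by positivity)
    refine ⟨C ^ p * Real.sqrt (c1 * c2), by positivity, ?_⟩
    intro ε hε
    have hεc : ε ∈ Set.Ioc (0:ℝ) ηc :=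
      ⟨hε.1, hε.2.trans ((min_le_left _ _).trans (min_le_left _ _))⟩
    have hεd : ε ∈ Set.Ioc (0:ℝ) ηd :=
      ⟨hε.1, hε.2.trans ((min_le_left _ _).trans (min_le_right _ _))⟩
    set L := Real.log (1/ε) with hLdef
    have hL0 : 0 ≤ L := by
      apply Real.log_nonneg
      rw [le_div_iff₀ hε.1]
      linarith [hε.2.trans (min_le_right (min ηc ηd) (1/2))]
    set A := |ω ε| ^ p with hA
    set B := |s ε| ^ p with hB
    have hA0 : 0 ≤ A := Real.rpow_nonneg (abs_nonneg _) _
    have hB0 : 0 ≤ B := Real.rpow_nonneg (abs_nonneg _) _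
    have hA2 : A ^ 2 ≤ c1 * L := by
      have : A ^ 2 = |ω ε| ^ (p * 2) := by
        rw [hA, ← Real.rpow_natCast (|ω ε| ^ p) 2, ← Real.rpow_mul (abs_nonneg _)]
        norm_num
      rw [this]; exact h1 ε hεc
    have hB2 : B ^ 2 ≤ c2 * L := by
      have : B ^ 2 = |s ε| ^ (p * 2) := by
        rw [hB, ← Real.rpow_natCast (|s ε| ^ p) 2, ← Real.rpow_mul (abs_nonneg _)]
        norm_num
      rw [this]; exact h2 ε hεd
    have hAB : A * B ≤ Real.sqrt (c1 * c2) * L := by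
      have hsq : (A * B) ^ 2 ≤ (c1 * c2) * L ^ 2 := by nlinarith [sq_nonneg A, sq_nonneg B]
      calc A * B = Real.sqrt ((A * B) ^ 2) := (Real.sqrt_sq (by positivity)).symm
        _ ≤ Real.sqrt ((c1 * c2) * L ^ 2) := Real.sqrt_le_sqrt hsq
        _ = Real.sqrt (c1 * c2) * L := by
            rw [Real.sqrt_mul (by positivity), Real.sqrt_sq hL0]
    have hsplit : |C * ω ε * s ε| ^ p = C ^ p * (A * B) := by
      rw [abs_mul, abs_mul, Real.mul_rpow (by positivity) (abs_nonneg _),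
        Real.mul_rpow (abs_nonneg _) (abs_nonneg _), abs_of_pos hC, hA, hB, mul_assoc]
    calc |C * ω ε * s ε| ^ p = C ^ p * (A * B) := hsplit
      _ ≤ C ^ p * (Real.sqrt (c1 * c2) * L) := by
          apply mul_le_mul_of_nonneg_left hAB (by positivity)
      _ = C ^ p * Real.sqrt (c1 * c2) * L := by ring
  · -- the main estimate
    refine ⟨min η₁ (min η₂ (min ηa ηb)),
      ⟨lt_min hη₁.1 (lt_min hη₂.1 (lt_min hηa.1 hηb.1)), (min_le_left _ _).trans hη₁.2⟩, ?_⟩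
    intro ε hε x hx ξ hξ hrξ
    have hε1 : ε ∈ Set.Ioc (0:ℝ) η₁ := ⟨hε.1, hε.2.trans (min_le_left _ _)⟩
    have hε2 : ε ∈ Set.Ioc (0:ℝ) η₂ :=
      ⟨hε.1, hε.2.trans ((min_le_right _ _).trans (min_le_left _ _))⟩
    have hεa : ε ∈ Set.Ioc (0:ℝ) ηa :=
      ⟨hε.1, hε.2.trans ((min_le_right _ _).trans ((min_le_right _ _).trans (min_le_left _ _)))⟩
    have hεb : ε ∈ Set.Ioc (0:ℝ) ηb :=
      ⟨hε.1, hε.2.trans ((min_le_right _ _).trans ((min_le_right _ _).trans (min_le_right _ _)))⟩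
    have hω0 : (0:ℝ) < ω ε := lt_of_lt_of_le hcω (hωlow ε hεa)
    have hs0 : (0:ℝ) < s ε := lt_of_lt_of_le hcs (hslow ε hεb)
    have hj0 : (0:ℝ) < jap ξ := lt_of_lt_of_le one_pos (one_le_jap ξ)
    have hD := hbound ε hε2 x hx ξ hξ
    have he := hell ε hε1 x hx ξ hξ hrξ
    have hm : jap ξ ^ m ≤ s ε * ‖a ε x ξ‖ := by
      calc jap ξ ^ m = s ε * (1 / s ε * jap ξ ^ m) := by
            rw [← mul_assoc, mul_one_div, div_self hs0.ne', one_mul]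
        _ ≤ s ε * ‖a ε x ξ‖ := mul_le_mul_of_nonneg_left he hs0.le
    have hsplit : jap ξ ^ (-m + (k:ℝ)) * jap ξ ^ (m - (k:ℝ)) = 1 := by
      rw [← Real.rpow_add hj0]
      norm_num
    have hkne : jap ξ ^ (m - (k:ℝ)) = jap ξ ^ m * jap ξ ^ (-(k:ℝ)) := by
      rw [← Real.rpow_add hj0]
      ring_nf
    set D := ‖iteratedFDeriv ℝ k (fun ξ' => iteratedFDeriv ℝ l (fun x' => a ε x' ξ') x) ξ‖
    have hD0 : 0 ≤ D := norm_nonneg _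
    calc D = D * jap ξ ^ (-m + (k:ℝ)) * jap ξ ^ (m - (k:ℝ)) := by
            rw [mul_assoc, hsplit, mul_one]
      _ ≤ (C * ω ε) * jap ξ ^ (m - (k:ℝ)) :=
            mul_le_mul_of_nonneg_right hD (Real.rpow_nonneg hj0.le _)
      _ = (C * ω ε) * (jap ξ ^ m * jap ξ ^ (-(k:ℝ))) := by rw [hkne]
      _ ≤ (C * ω ε) * ((s ε * ‖a ε x ξ‖) * jap ξ ^ (-(k:ℝ))) := by
            have hjk : (0:ℝ) ≤ jap ξ ^ (-(k:ℝ)) := Real.rpow_nonneg hj0.le _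
            have : jap ξ ^ m * jap ξ ^ (-(k:ℝ)) ≤ (s ε * ‖a ε x ξ‖) * jap ξ ^ (-(k:ℝ)) :=
              mul_le_mul_of_nonneg_right hm hjk
            exact mul_le_mul_of_nonneg_left this (by positivity)
      _ = (fun ε => C * ω ε * s ε) ε * ‖a ε x ξ‖ * jap ξ ^ (-(k:ℝ)) := by ring
end

section
/- For smooth (ε-independent) symbols, lsc-ellipticity implies classical ellipticity: let a ∈ S^m be a classical symbol and suppose some net (a_ε) with a − a_ε negligible (sup norms O(ε^q)⟨ξ⟩^m for all q) satisfies |a_ε(x,ξ)| ≥ (1/s_ε)⟨ξ⟩^m for |ξ| ≥ r_ε and ε ∈ (0,η], with (r_ε),(s_ε) ∈ Π_lsc. Then there exist constants c > 0 and R > 0 with |a(x,ξ)| ≥ c⟨ξ⟩^m for all (x,ξ) in the given region with |ξ| ≥ R. -/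
/-- For smooth (ε-independent) symbols, lsc-ellipticity of a representative
implies classical ellipticity: a uniform positive lower bound `c⟨ξ⟩^m` for
`|ξ| ≥ R`. -/
theorem lsc_elliptic_implies_classical {n : ℕ} (m : ℝ)
    (U Γ : Set (EuclideanSpace ℝ (Fin n)))
    (a : EuclideanSpace ℝ (Fin n) → EuclideanSpace ℝ (Fin n) → ℂ)
    (aeps : ℝ → EuclideanSpace ℝ (Fin n) → EuclideanSpace ℝ (Fin n) → ℂ)
    (hneg : ∀ q : ℕ, ∃ C > (0:ℝ), ∃ η ∈ Set.Ioc (0:ℝ) 1, ∀ ε ∈ Set.Ioc (0:ℝ) η,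
      ∀ x ∈ U, ∀ ξ ∈ Γ, ‖a x ξ - aeps ε x ξ‖ * jap ξ ^ (-m) ≤ C * ε ^ (q:ℝ))
    (r s : ℝ → ℝ) (hr : IsLSC r) (hs : IsLSC s)
    (η : ℝ) (hη : η ∈ Set.Ioc (0:ℝ) 1)
    (hell : ∀ ε ∈ Set.Ioc (0:ℝ) η, ∀ x ∈ U, ∀ ξ ∈ Γ, r ε ≤ ‖ξ‖ →
      (1 / s ε) * jap ξ ^ m ≤ ‖aeps ε x ξ‖) :
    ∃ c > (0:ℝ), ∃ R > (0:ℝ), ∀ x ∈ U, ∀ ξ ∈ Γ, R ≤ ‖ξ‖ →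
      c * jap ξ ^ m ≤ ‖a x ξ‖ := by
  obtain ⟨C, hC, ηn, hηn, hnegC⟩ := hneg 1
  obtain ⟨ηs1, hηs1, cs, hcs, hslow⟩ := hs.1
  obtain ⟨ηs2, hηs2, hmod⟩ := hs.2
  obtain ⟨c1, hc1, hs1⟩ := hmod 1 zero_le_one
  -- choose ε small
  set ηm : ℝ := min (min η ηn) (min ηs1 ηs2) with hηm
  have hηm0 : 0 < ηm := by
    simp only [hηm, lt_min_iff]
    exact ⟨⟨hη.1, hηn.1⟩, hηs1.1, hηs2.1⟩
  have htend := tendsto_log_mul_rpow_nhdsGT_zero (r := 1) zero_lt_one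
  have hδ : (0:ℝ) < 1 / (C * c1) := by positivity
  have hev1 : ∀ᶠ x in nhdsWithin (0:ℝ) (Set.Ioi 0),
      dist (Real.log x * x ^ (1:ℝ)) 0 < 1 / (C * c1) :=
    Metric.tendsto_nhds.mp htend _ hδ
  have hev2 : ∀ᶠ x in nhdsWithin (0:ℝ) (Set.Ioi 0), x ∈ Set.Ioc (0:ℝ) ηm :=
    Ioc_mem_nhdsGT hηm0
  obtain ⟨ε, hε1, hε2⟩ := (hev1.and hev2).exists
  have hε0 : 0 < ε := hε2.1
  have hεη : ε ≤ η := le_trans hε2.2 (le_trans (min_le_left _ _) (min_le_left _ _))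
  have hεηn : ε ≤ ηn := le_trans hε2.2 (le_trans (min_le_left _ _) (min_le_right _ _))
  have hεs1 : ε ≤ ηs1 := le_trans hε2.2 (le_trans (min_le_right _ _) (min_le_left _ _))
  have hεs2 : ε ≤ ηs2 := le_trans hε2.2 (le_trans (min_le_right _ _) (min_le_right _ _))
  set L : ℝ := Real.log (1 / ε) with hL
  have hspos : 0 < s ε := lt_of_lt_of_le hcs (hslow ε ⟨hε0, hεs1⟩)
  have hsle : s ε ≤ c1 * L := by
    have := hs1 ε ⟨hε0, hεs2⟩
    rwa [Real.rpow_one, abs_of_pos hspos] at this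
  have hLpos : 0 < L := by nlinarith [lt_of_lt_of_le hspos hsle]
  have hlogeq : Real.log ε = -L := by
    rw [hL, one_div, Real.log_inv, neg_neg]
  have hkey : C * ε < 1 / (c1 * L) := by
    rw [Real.dist_eq, sub_zero, Real.rpow_one, hlogeq] at hε1
    have habs : |(-L) * ε| = L * ε := by
      rw [abs_mul, abs_neg, abs_of_pos hLpos, abs_of_pos hε0]
    rw [habs] at hε1
    rw [lt_div_iff₀ (by positivity)]
    calc C * ε * (c1 * L) = C * c1 * (L * ε) := by ring
      _ < C * c1 * (1 / (C * c1)) := mul_lt_mul_of_pos_left hε1 (by positivity)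
      _ = 1 := by field_simp
  set c : ℝ := 1 / (c1 * L) - C * ε with hc
  have hcpos : 0 < c := by simp only [hc]; linarith
  refine ⟨c, hcpos, max (r ε) 1, lt_of_lt_of_le one_pos (le_max_right _ _), ?_⟩
  intro x hx ξ hξ hR
  have hjm : (0:ℝ) < jap ξ ^ m := Real.rpow_pos_of_pos (jap_pos ξ) m
  have h1 : (1 / s ε) * jap ξ ^ m ≤ ‖aeps ε x ξ‖ :=
    hell ε ⟨hε0, hεη⟩ x hx ξ hξ (le_trans (le_max_left _ _) hR)
  have h2 : ‖a x ξ - aeps ε x ξ‖ ≤ C * ε * jap ξ ^ m := by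
    have := hnegC ε ⟨hε0, hεηn⟩ x hx ξ hξ
    rw [Real.rpow_neg (jap_pos ξ).le, Nat.cast_one, Real.rpow_one] at this
    calc ‖a x ξ - aeps ε x ξ‖
        = ‖a x ξ - aeps ε x ξ‖ * (jap ξ ^ m)⁻¹ * jap ξ ^ m := by
          field_simp
      _ ≤ C * ε * jap ξ ^ m := mul_le_mul_of_nonneg_right this hjm.le
  have h3 : 1 / (c1 * L) ≤ 1 / s ε := one_div_le_one_div_of_le hspos hsle
  have h4 : ‖aeps ε x ξ‖ ≤ ‖a x ξ‖ + ‖a x ξ - aeps ε x ξ‖ := by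
    have he : aeps ε x ξ = a x ξ - (a x ξ - aeps ε x ξ) := by ring
    calc ‖aeps ε x ξ‖ = ‖a x ξ - (a x ξ - aeps ε x ξ)‖ := by rw [← he]
      _ ≤ ‖a x ξ‖ + ‖a x ξ - aeps ε x ξ‖ := norm_sub_le _ _
  have h5 : (1 / (c1 * L)) * jap ξ ^ m ≤ (1 / s ε) * jap ξ ^ m :=
    mul_le_mul_of_nonneg_right h3 hjm.le
  calc c * jap ξ ^ m = (1 / (c1 * L)) * jap ξ ^ m - C * ε * jap ξ ^ m := by
        rw [hc]; ring
    _ ≤ ‖aeps ε x ξ‖ - ‖a x ξ - aeps ε x ξ‖ := by linarith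
    _ ≤ ‖a x ξ‖ := by linarith
end

section
/- Classical ellipticity of the principal symbol implies lsc-ellipticity of the full symbol: let (a_ε) = (a_{m,ε}) + (rest_ε) where (a_{m,ε}) satisfies |a_{m,ε}(x,ξ)| ≥ (1/s_ε)⟨ξ⟩^m for all (x,ξ) with |ξ| ≥ r (r > 0 a constant) and ε ∈ (0,η], with (s_ε) ∈ Π_lsc, and where sup |rest_ε(x,ξ)|⟨ξ⟩^{-(m−1)} = O(ω_ε) for some (ω_ε) ∈ Π_lsc. Then there exists (r_ε) ∈ Π_lsc and η' ∈ (0,1] with |a_ε(x,ξ)| ≥ (1/(2s_ε))⟨ξ⟩^m for |ξ| ≥ r_ε and ε ∈ (0,η']; one may take r_ε = max(r, 2cω_ε s_ε). -/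
/-- Classical ellipticity of the principal symbol implies lsc-ellipticity of the
full symbol; one may take `r_ε = max(r, 2 c ω_ε s_ε)`. -/
theorem principal_elliptic_implies_lsc_elliptic {n : ℕ} (m : ℝ)
    (am rest : ℝ → EuclideanSpace ℝ (Fin n) → EuclideanSpace ℝ (Fin n) → ℂ)
    (s ω : ℝ → ℝ) (hs : IsLSC s) (hω : IsLSC ω)
    (r : ℝ) (hrpos : 0 < r) (c : ℝ) (hc : 0 < c)
    (η : ℝ) (hη : η ∈ Set.Ioc (0:ℝ) 1)
    (hm : ∀ ε ∈ Set.Ioc (0:ℝ) η, ∀ x ξ, r ≤ ‖ξ‖ →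
      (1 / s ε) * jap ξ ^ m ≤ ‖am ε x ξ‖)
    (hrest : ∀ ε ∈ Set.Ioc (0:ℝ) η, ∀ x ξ,
      ‖rest ε x ξ‖ * jap ξ ^ (-(m - 1)) ≤ c * ω ε) :
    IsLSC (fun ε => max r (2 * c * ω ε * s ε)) ∧
    ∃ η' ∈ Set.Ioc (0:ℝ) 1, ∀ ε ∈ Set.Ioc (0:ℝ) η', ∀ x ξ,
      max r (2 * c * ω ε * s ε) ≤ ‖ξ‖ →
      (1 / (2 * s ε)) * jap ξ ^ m ≤ ‖am ε x ξ + rest ε x ξ‖ := by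
  obtain ⟨⟨ηs1, hηs1, cs, hcs, hslb⟩, ⟨ηs2, hηs2, hsp⟩⟩ := hs
  obtain ⟨⟨ηω1, hηω1, cω, hcω, hωlb⟩, ⟨ηω2, hηω2, hωp⟩⟩ := hω
  constructor
  · constructor
    · exact ⟨1, ⟨one_pos, le_refl 1⟩, r, hrpos, fun ε _ => le_max_left _ _⟩
    · refine ⟨min (min ηs2 ηω2) (Real.exp (-1)), ⟨?_, ?_⟩, ?_⟩
      · exact lt_min (lt_min hηs2.1 hηω2.1) (Real.exp_pos _)
      · refine le_trans (min_le_right _ _) ?_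
        have := Real.exp_le_one_iff.mpr (by norm_num : (-1:ℝ) ≤ 0)
        linarith
      · intro p hp
        obtain ⟨c1, hc1, h1⟩ := hsp (2 * p) (by linarith)
        obtain ⟨c2, hc2, h2⟩ := hωp (2 * p) (by linarith)
        refine ⟨r ^ p + (2 * c) ^ p * ((c1 + c2) / 2), by positivity, ?_⟩
        intro ε hε
        have hε0 : 0 < ε := hε.1
        have hεs : ε ∈ Set.Ioc (0:ℝ) ηs2 :=
          ⟨hε0, le_trans hε.2 (le_trans (min_le_left _ _) (min_le_left _ _))⟩
        have hεω : ε ∈ Set.Ioc (0:ℝ) ηω2 :=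
          ⟨hε0, le_trans hε.2 (le_trans (min_le_left _ _) (min_le_right _ _))⟩
        have hεe : ε ≤ Real.exp (-1) := le_trans hε.2 (min_le_right _ _)
        have hlog : 1 ≤ Real.log (1 / ε) := by
          rw [Real.le_log_iff_exp_le (by positivity), le_div_iff₀ hε0]
          calc Real.exp 1 * ε ≤ Real.exp 1 * Real.exp (-1) :=
                mul_le_mul_of_nonneg_left hεe (Real.exp_nonneg 1)
            _ = 1 := by rw [← Real.exp_add]; norm_num
        have hrp : (0:ℝ) < r ^ p := Real.rpow_pos_of_pos hrpos p
        have hlog0 : 0 ≤ Real.log (1 / ε) := by linarith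
        set A := |s ε| ^ p with hA
        set B := |ω ε| ^ p with hB
        have hA0 : 0 ≤ A := Real.rpow_nonneg (abs_nonneg _) p
        have hB0 : 0 ≤ B := Real.rpow_nonneg (abs_nonneg _) p
        have hA2 : A ^ 2 ≤ c1 * Real.log (1 / ε) := by
          have := h1 ε hεs
          rw [hA, ← Real.rpow_natCast (|s ε| ^ p) 2, ← Real.rpow_mul (abs_nonneg _)]
          convert this using 2
          push_cast; ring
        have hB2 : B ^ 2 ≤ c2 * Real.log (1 / ε) := by
          have := h2 ε hεω
          rw [hB, ← Real.rpow_natCast (|ω ε| ^ p) 2, ← Real.rpow_mul (abs_nonneg _)]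
          convert this using 2
          push_cast; ring
        have hmaxpos : 0 < max r (2 * c * ω ε * s ε) := lt_max_of_lt_left hrpos
        simp only [abs_of_pos hmaxpos]
        rcases le_total (2 * c * ω ε * s ε) r with hle | hle
        · rw [max_eq_left hle]
          have h2p : 0 ≤ (2 * c) ^ p * ((c1 + c2) / 2) := by positivity
          nlinarith [mul_le_mul_of_nonneg_left hlog (le_of_lt hrp)]
        · rw [max_eq_right hle]
          have hbpos : 0 < 2 * c * ω ε * s ε := lt_of_lt_of_le hrpos hle
          have hfac : (2 * c * ω ε * s ε) ^ p = (2 * c) ^ p * B * A := by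
            have : 2 * c * ω ε * s ε = |2 * c * ω ε * s ε| := (abs_of_pos hbpos).symm
            rw [this, abs_mul, abs_mul, abs_of_pos (by linarith : (0:ℝ) < 2 * c),
              Real.mul_rpow (by positivity) (abs_nonneg _),
              Real.mul_rpow (by positivity) (abs_nonneg _)]
          rw [hfac]
          have hAB : B * A ≤ (c1 + c2) / 2 * Real.log (1 / ε) := by
            nlinarith [sq_nonneg (A - B)]
          have h2cp : (0:ℝ) < (2 * c) ^ p := Real.rpow_pos_of_pos (by linarith) p
          nlinarith [mul_le_mul_of_nonneg_left hAB (le_of_lt h2cp)]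
  · refine ⟨min η (min ηs1 ηω1), ⟨lt_min hη.1 (lt_min hηs1.1 hηω1.1),
      le_trans (min_le_left _ _) hη.2⟩, ?_⟩
    intro ε hε x ξ hξ
    have hε0 : 0 < ε := hε.1
    have hεη : ε ∈ Set.Ioc (0:ℝ) η := ⟨hε0, le_trans hε.2 (min_le_left _ _)⟩
    have hεs : ε ∈ Set.Ioc (0:ℝ) ηs1 :=
      ⟨hε0, le_trans hε.2 (le_trans (min_le_right _ _) (min_le_left _ _))⟩
    have hεω : ε ∈ Set.Ioc (0:ℝ) ηω1 :=
      ⟨hε0, le_trans hε.2 (le_trans (min_le_right _ _) (min_le_right _ _))⟩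
    have hsε : 0 < s ε := lt_of_lt_of_le hcs (hslb ε hεs)
    have hωε : 0 < ω ε := lt_of_lt_of_le hcω (hωlb ε hεω)
    have hr : r ≤ ‖ξ‖ := le_trans (le_max_left _ _) hξ
    have hb : 2 * c * ω ε * s ε ≤ ‖ξ‖ := le_trans (le_max_right _ _) hξ
    have hjpos : 0 < jap ξ := by
      rw [jap]
      exact Real.sqrt_pos.mpr (by positivity)
    have hjξ : ‖ξ‖ ≤ jap ξ := by
      rw [jap]
      nlinarith [Real.sq_sqrt (by positivity : (0:ℝ) ≤ 1 + ‖ξ‖ ^ 2),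
        Real.sqrt_nonneg (1 + ‖ξ‖ ^ 2), norm_nonneg ξ]
    have hJ1 : (0:ℝ) < jap ξ ^ (m - 1) := Real.rpow_pos_of_pos hjpos _
    have hrest' : ‖rest ε x ξ‖ ≤ c * ω ε * jap ξ ^ (m - 1) := by
      have h := hrest ε hεη x ξ
      rw [Real.rpow_neg (le_of_lt hjpos)] at h
      rw [← div_le_iff₀ hJ1] at *
      rwa [div_eq_mul_inv]
    have ham : (1 / s ε) * jap ξ ^ m ≤ ‖am ε x ξ‖ := hm ε hεη x ξ hr
    have htri : ‖am ε x ξ‖ ≤ ‖am ε x ξ + rest ε x ξ‖ + ‖rest ε x ξ‖ := by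
      calc ‖am ε x ξ‖ = ‖(am ε x ξ + rest ε x ξ) - rest ε x ξ‖ := by ring_nf
        _ ≤ ‖am ε x ξ + rest ε x ξ‖ + ‖rest ε x ξ‖ := norm_sub_le _ _
    have hsplit : jap ξ ^ m = jap ξ ^ (m - 1) * jap ξ := by
      have h := Real.rpow_add hjpos (m - 1) 1
      rw [Real.rpow_one, show m - 1 + 1 = m by ring] at h
      exact h
    have hkey : c * ω ε * jap ξ ^ (m - 1) ≤ (1 / (2 * s ε)) * jap ξ ^ m := by
      rw [hsplit]
      have h1 : c * ω ε ≤ (1 / (2 * s ε)) * jap ξ := by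
        rw [div_mul_eq_mul_div, le_div_iff₀ (by positivity)]
        nlinarith [le_trans hb hjξ]
      nlinarith [mul_le_mul_of_nonneg_right h1 (le_of_lt hJ1)]
    have heq : (1 / s ε) * jap ξ ^ m = 2 * ((1 / (2 * s ε)) * jap ξ ^ m) := by
      field_simp
    linarith
end

section
/- The cut-off nets χ_ε respect the hyperbolic cones for small ε: let c*, c_ε ∈ C(ℝⁿ) with 0 < c₀ ≤ c_ε, c* ≤ c₁ and sup|c_ε − c*| = O(ω_ε^{-μ}) with ω_ε → ∞, fix angles 0 < θ₁ < γ₁ < γ₂ < θ₂ < π/2, and set f_ε(x,z,τ,ξ) := c_ε(x,z) ξ/τ for τ ≠ 0. Then there exists η ∈ (0,1] such that for all ε ∈ (0,η]: (1) if |c*(x,z)ξ/τ| ≤ sin θ₁ then |f_ε(x,z,τ,ξ)| ≤ sin γ₁; and (2) if |c*(x,z)ξ/τ| ≥ sin θ₂ then |f_ε(x,z,τ,ξ)| ≥ sin γ₂. -/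
open Real

/-- The cut-off nets respect the hyperbolic cones for small `ε`: with
`f_ε = c_ε(x,z) ξ/τ`, for all small `ε` one has `|f_ε| ≤ sin γ₁` on `I'_{θ₁}` and
`|f_ε| ≥ sin γ₂` where `|c* ξ/τ| ≥ sin θ₂`. -/
theorem cutoff_respects_cones {n k : ℕ}
    (c₀ c₁ μ : ℝ) (hc₀ : 0 < c₀) (hc₀₁ : c₀ ≤ c₁) (hμ : μ ∈ Set.Ioo (0:ℝ) 1)
    (cstar : EuclideanSpace ℝ (Fin n) → ℝ)
    (hcstar : ∀ w, c₀ ≤ cstar w ∧ cstar w ≤ c₁)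
    (ceps : ℝ → EuclideanSpace ℝ (Fin n) → ℝ)
    (hceps : ∀ ε ∈ Set.Ioc (0:ℝ) 1, ∀ w, c₀ ≤ ceps ε w ∧ ceps ε w ≤ c₁)
    (ω : ℝ → ℝ)
    (hωtop : Filter.Tendsto ω (nhdsWithin 0 (Set.Ioi 0)) Filter.atTop)
    (C₀ : ℝ) (hC₀ : 0 < C₀)
    (happrox : ∃ η ∈ Set.Ioc (0:ℝ) 1, ∀ ε ∈ Set.Ioc (0:ℝ) η, ∀ w,
      |ceps ε w - cstar w| ≤ C₀ * (ω ε) ^ (-μ))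
    (θ₁ γ₁ γ₂ θ₂ : ℝ)
    (hangles : 0 < θ₁ ∧ θ₁ < γ₁ ∧ γ₁ < γ₂ ∧ γ₂ < θ₂ ∧ θ₂ < π/2) :
    ∃ η ∈ Set.Ioc (0:ℝ) 1, ∀ ε ∈ Set.Ioc (0:ℝ) η,
      ∀ w : EuclideanSpace ℝ (Fin n), ∀ τ : ℝ, ∀ ξ : EuclideanSpace ℝ (Fin k),
        τ ≠ 0 →
        (cstar w * ‖ξ‖ ≤ Real.sin θ₁ * |τ| → ceps ε w * ‖ξ‖ ≤ Real.sin γ₁ * |τ|) ∧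
        (Real.sin θ₂ * |τ| ≤ cstar w * ‖ξ‖ → Real.sin γ₂ * |τ| ≤ ceps ε w * ‖ξ‖) := by
  obtain ⟨hθ₁, h12, h23, h34, hθ₂⟩ := hangles
  obtain ⟨hμ0, hμ1⟩ := hμ
  have hpi : (0:ℝ) < π := Real.pi_pos
  have hmemθ₁ : θ₁ ∈ Set.Icc (-(π/2)) (π/2) := ⟨by linarith, by linarith⟩
  have hmemγ₁ : γ₁ ∈ Set.Icc (-(π/2)) (π/2) := ⟨by linarith, by linarith⟩
  have hmemγ₂ : γ₂ ∈ Set.Icc (-(π/2)) (π/2) := ⟨by linarith, by linarith⟩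
  have hmemθ₂ : θ₂ ∈ Set.Icc (-(π/2)) (π/2) := ⟨by linarith, by linarith⟩
  have hs₁ : 0 < Real.sin θ₁ := Real.sin_pos_of_pos_of_lt_pi hθ₁ (by linarith)
  have hs1g1 : Real.sin θ₁ < Real.sin γ₁ := Real.strictMonoOn_sin hmemθ₁ hmemγ₁ h12
  have hg2s2 : Real.sin γ₂ < Real.sin θ₂ := Real.strictMonoOn_sin hmemγ₂ hmemθ₂ h34
  have hg₂ : 0 < Real.sin γ₂ := Real.sin_pos_of_pos_of_lt_pi (by linarith) (by linarith)
  have hs₂ : 0 < Real.sin θ₂ := by linarith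
  set δ : ℝ := min (c₀ * (Real.sin γ₁ - Real.sin θ₁) / Real.sin θ₁)
      (c₀ * (Real.sin θ₂ - Real.sin γ₂) / Real.sin θ₂) with hδdef
  have hδpos : 0 < δ := lt_min
    (div_pos (mul_pos hc₀ (sub_pos.mpr hs1g1)) hs₁)
    (div_pos (mul_pos hc₀ (sub_pos.mpr hg2s2)) hs₂)
  have hδ1 : δ * Real.sin θ₁ ≤ c₀ * (Real.sin γ₁ - Real.sin θ₁) := by
    have := min_le_left (c₀ * (Real.sin γ₁ - Real.sin θ₁) / Real.sin θ₁)
      (c₀ * (Real.sin θ₂ - Real.sin γ₂) / Real.sin θ₂)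
    rw [← hδdef] at this
    calc δ * Real.sin θ₁ ≤ (c₀ * (Real.sin γ₁ - Real.sin θ₁) / Real.sin θ₁) * Real.sin θ₁ := by
          exact mul_le_mul_of_nonneg_right this hs₁.le
      _ = c₀ * (Real.sin γ₁ - Real.sin θ₁) := by field_simp
  have hδ2 : δ * Real.sin θ₂ ≤ c₀ * (Real.sin θ₂ - Real.sin γ₂) := by
    have := min_le_right (c₀ * (Real.sin γ₁ - Real.sin θ₁) / Real.sin θ₁)
      (c₀ * (Real.sin θ₂ - Real.sin γ₂) / Real.sin θ₂)
    rw [← hδdef] at this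
    calc δ * Real.sin θ₂ ≤ (c₀ * (Real.sin θ₂ - Real.sin γ₂) / Real.sin θ₂) * Real.sin θ₂ := by
          exact mul_le_mul_of_nonneg_right this hs₂.le
      _ = c₀ * (Real.sin θ₂ - Real.sin γ₂) := by field_simp
  -- choose M so that C₀ * M ^ (-μ) ≤ δ for ω ε ≥ M
  set M : ℝ := max 1 ((C₀ / δ) ^ (μ⁻¹)) with hMdef
  have hM1 : (1:ℝ) ≤ M := le_max_left _ _
  have hM0 : (0:ℝ) < M := lt_of_lt_of_le one_pos hM1
  have hMpow : C₀ / δ ≤ M ^ μ := by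
    have h1 : (C₀ / δ) ^ (μ⁻¹) ≤ M := le_max_right _ _
    have h2 : ((C₀ / δ) ^ (μ⁻¹)) ^ μ ≤ M ^ μ :=
      Real.rpow_le_rpow (Real.rpow_nonneg (by positivity) _) h1 hμ0.le
    rw [← Real.rpow_mul (by positivity : (0:ℝ) ≤ C₀ / δ),
      inv_mul_cancel₀ hμ0.ne', Real.rpow_one] at h2
    exact h2
  have hsmall : ∀ x : ℝ, M ≤ x → C₀ * x ^ (-μ) ≤ δ := by
    intro x hx
    have hx0 : (0:ℝ) < x := lt_of_lt_of_le hM0 hx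
    have hxpow : C₀ / δ ≤ x ^ μ :=
      hMpow.trans (Real.rpow_le_rpow hM0.le hx hμ0.le)
    have hxpow0 : (0:ℝ) < x ^ μ := Real.rpow_pos_of_pos hx0 _
    rw [Real.rpow_neg hx0.le]
    rw [div_le_iff₀ hδpos] at hxpow
    calc C₀ * (x ^ μ)⁻¹ ≤ (x ^ μ * δ) * (x ^ μ)⁻¹ :=
          mul_le_mul_of_nonneg_right hxpow (by positivity)
      _ = δ := by field_simp
  -- get η₀ from the tendsto hypothesis
  have hev : ∀ᶠ ε in nhdsWithin 0 (Set.Ioi 0), M ≤ ω ε :=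
    hωtop.eventually (Filter.eventually_ge_atTop M)
  rw [Filter.eventually_iff, mem_nhdsGT_iff_exists_Ioc_subset] at hev
  obtain ⟨η₀, hη₀pos, hη₀⟩ := hev
  obtain ⟨ηa, ⟨hηa0, hηa1⟩, hηa⟩ := happrox
  refine ⟨min η₀ ηa, ⟨lt_min hη₀pos hηa0, (min_le_right _ _).trans hηa1⟩, ?_⟩
  rintro ε ⟨hε0, hε⟩ w τ ξ hτ
  have hεη₀ : ε ≤ η₀ := hε.trans (min_le_left _ _)
  have hεηa : ε ∈ Set.Ioc (0:ℝ) ηa := ⟨hε0, hε.trans (min_le_right _ _)⟩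
  have hMω : M ≤ ω ε := hη₀ ⟨hε0, hεη₀⟩
  have hδε : |ceps ε w - cstar w| ≤ δ := (hηa ε hεηa w).trans (hsmall _ hMω)
  have habs := abs_le.mp hδε
  have hcw := hcstar w
  have hξ : (0:ℝ) ≤ ‖ξ‖ := norm_nonneg ξ
  have hτ0 : (0:ℝ) < |τ| := abs_pos.mpr hτ
  constructor
  · intro h
    have hA : (ceps ε w - cstar w) * (‖ξ‖ * Real.sin θ₁) ≤ δ * (‖ξ‖ * Real.sin θ₁) :=
      mul_le_mul_of_nonneg_right habs.2 (mul_nonneg hξ hs₁.le)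
    have hB : δ * Real.sin θ₁ * ‖ξ‖ ≤ c₀ * (Real.sin γ₁ - Real.sin θ₁) * ‖ξ‖ :=
      mul_le_mul_of_nonneg_right hδ1 hξ
    have hC : c₀ * ‖ξ‖ * (Real.sin γ₁ - Real.sin θ₁)
        ≤ cstar w * ‖ξ‖ * (Real.sin γ₁ - Real.sin θ₁) :=
      mul_le_mul_of_nonneg_right (mul_le_mul_of_nonneg_right hcw.1 hξ)
        (sub_nonneg.mpr hs1g1.le)
    have hD : cstar w * ‖ξ‖ * Real.sin θ₁ ≤ Real.sin θ₁ * |τ| * Real.sin θ₁ :=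
      mul_le_mul_of_nonneg_right h hs₁.le
    have hE : cstar w * ‖ξ‖ * (Real.sin γ₁ - Real.sin θ₁)
        ≤ Real.sin θ₁ * |τ| * (Real.sin γ₁ - Real.sin θ₁) :=
      mul_le_mul_of_nonneg_right h (sub_nonneg.mpr hs1g1.le)
    have key : ceps ε w * ‖ξ‖ * Real.sin θ₁ ≤ Real.sin γ₁ * |τ| * Real.sin θ₁ := by
      ring_nf at hA hB hC hD hE ⊢
      linarith [hA, hB, hC, hD, hE]
    exact le_of_mul_le_mul_right key hs₁
  · intro h
    have hA : -(δ * (‖ξ‖ * Real.sin θ₂)) ≤ (ceps ε w - cstar w) * (‖ξ‖ * Real.sin θ₂) := by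
      have := mul_le_mul_of_nonneg_right habs.1 (mul_nonneg hξ hs₂.le)
      linarith [this]
    have hB : δ * Real.sin θ₂ * ‖ξ‖ ≤ c₀ * (Real.sin θ₂ - Real.sin γ₂) * ‖ξ‖ :=
      mul_le_mul_of_nonneg_right hδ2 hξ
    have hC : c₀ * ‖ξ‖ * (Real.sin θ₂ - Real.sin γ₂)
        ≤ cstar w * ‖ξ‖ * (Real.sin θ₂ - Real.sin γ₂) :=
      mul_le_mul_of_nonneg_right (mul_le_mul_of_nonneg_right hcw.1 hξ)
        (sub_nonneg.mpr hg2s2.le)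
    have hD : Real.sin θ₂ * |τ| * Real.sin γ₂ ≤ cstar w * ‖ξ‖ * Real.sin γ₂ :=
      mul_le_mul_of_nonneg_right h hg₂.le
    have key : Real.sin γ₂ * |τ| * Real.sin θ₂ ≤ ceps ε w * ‖ξ‖ * Real.sin θ₂ := by
      ring_nf at hA hB hC hD ⊢
      linarith [hA, hB, hC, hD]
    exact le_of_mul_le_mul_right key hs₂
end
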